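/- arXiv:2509.02704 — 6 statements merged into one kernel-verified Lean document; each statement's English description precedes it below -/
import Mathlib

section
/- Let λ₁, λ₂, λ₃ > 0, θ > 0, c₁, c₂, c₃ > 0, u* ∈ ℝ, and write φᵢ = φ_{λᵢ} where φ_λ(x) = λ(e^x − 1). Let η₁, η₂, η₃ : [0,∞) → ℝ be differentiable and set z₁ = η₃ − η₂, z₂ = η₁ − z₁. Assume φ₁(z₂(t)) ≠ 0 for all t and that the closed-loop system η₁′ = u* − u − φ₂(η₂), η₂′ = −φ₃(η₃), η₃′ = −φ₁(η₁) holds, where the control is u = u* + (1/φ₁(z₂))·(c₃·φ₁(z₂)² + θc₁·φ₂(η₂)² + θc₂·φ₃(z₁)²) + ((φ₁(z₂) − θφ₃(z₁))/φ₁(z₂))·φ₁(η₁) − φ₂(η₂) + ((θφ₃(z₁) − φ₁(z₂) − θφ₂(η₂))/φ₁(z₂))·φ₃(η₃). Then, with V₃(η₂, z₁, z₂) = θλ₂ω̃(η₂) + θλ₃ω̃(z₁) + λ₁ω̃(z₂) and ω̃(x) = e^x − 1 − x, one has for every t: d/dt [V₃(η₂(t), z₁(t), z₂(t))] = −θc₁·φ₂(η₂(t))²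 − θc₂·φ₃(z₁(t))² − c₃·φ₁(z₂(t))². -/
/-- `φ_λ(x) = λ(e^x − 1)`. -/
noncomputable def phiL (l x : ℝ) : ℝ := l * (Real.exp x - 1)

/-- `ω̃(x) = e^x − 1 − x`. -/
noncomputable def omegaTilde (x : ℝ) : ℝ := Real.exp x - 1 - x

lemma phiL_mul_left (c l x : ℝ) : phiL (c * l) x = c * phiL l x :=
  mul_assoc c l _

lemma hasDerivAt_omegaTilde (x : ℝ) : HasDerivAt omegaTilde (Real.exp x - 1) x :=
  ((Real.hasDerivAt_exp x).sub_const 1).sub (hasDerivAt_id x)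

lemma HasDerivWithinAt.const_mul_omegaTilde {f : ℝ → ℝ} {f' t : ℝ} {s : Set ℝ}
    (hf : HasDerivWithinAt f f' s t) (l : ℝ) :
    HasDerivWithinAt (fun x => l * omegaTilde (f x)) (phiL l (f t) * f') s t := by
  have h := ((hasDerivAt_omegaTilde (f t)).comp_hasDerivWithinAt t hf).const_mul l
  rwa [← mul_assoc] at h

/-- The terms of the control divided by `p` cancel every cross term of `dV₃/dt`, leaving
only the damping terms. Here `p = φ₁(z₂)`, `a = φ₂(η₂)`, `b = φ₃(z₁)`,
`A = φ₁(η₁)`, `C = φ₃(η₃)`. -/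
lemma backstepping_rate_eq (θ c1 c2 c3 ustar p a b A C : ℝ) (hp : p ≠ 0) :
    θ * (a * -C) + θ * (b * (C - A))
      + p * (ustar - (ustar + 1 / p * (c3 * p ^ 2 + θ * c1 * a ^ 2 + θ * c2 * b ^ 2)
          + (p - θ * b) / p * A - a + (θ * b - p - θ * a) / p * C) - a + A - C)
      = -(θ * c1 * a ^ 2) - θ * c2 * b ^ 2 - c3 * p ^ 2 := by
  field_simp
  ring

theorem stmt2_general (l1 l2 l3 θ c1 c2 c3 ustar : ℝ)
    (η1 η2 η3 z1 z2 u : ℝ → ℝ)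
    (hz1 : ∀ t, z1 t = η3 t - η2 t)
    (hz2 : ∀ t, z2 t = η1 t - z1 t)
    (hne : ∀ t, 0 ≤ t → phiL l1 (z2 t) ≠ 0)
    (hu : ∀ t, u t = ustar
      + (1 / phiL l1 (z2 t)) *
          (c3 * (phiL l1 (z2 t))^2 + θ * c1 * (phiL l2 (η2 t))^2
            + θ * c2 * (phiL l3 (z1 t))^2)
      + ((phiL l1 (z2 t) - θ * phiL l3 (z1 t)) / phiL l1 (z2 t)) * phiL l1 (η1 t)
      - phiL l2 (η2 t)
      + ((θ * phiL l3 (z1 t) - phiL l1 (z2 t) - θ * phiL l2 (η2 t)) / phiL l1 (z2 t))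
          * phiL l3 (η3 t))
    (hd1 : ∀ t, 0 ≤ t →
      HasDerivWithinAt η1 (ustar - u t - phiL l2 (η2 t)) (Set.Ici 0) t)
    (hd2 : ∀ t, 0 ≤ t →
      HasDerivWithinAt η2 (-(phiL l3 (η3 t))) (Set.Ici 0) t)
    (hd3 : ∀ t, 0 ≤ t →
      HasDerivWithinAt η3 (-(phiL l1 (η1 t))) (Set.Ici 0) t) :
    ∀ t, 0 ≤ t → HasDerivWithinAt
      (fun s => θ * l2 * omegaTilde (η2 s) + θ * l3 * omegaTilde (z1 s)
        + l1 * omegaTilde (z2 s))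
      (-(θ * c1 * (phiL l2 (η2 t))^2) - θ * c2 * (phiL l3 (z1 t))^2
        - c3 * (phiL l1 (z2 t))^2)
      (Set.Ici 0) t := by
  intro t ht
  have hdz1 : HasDerivWithinAt z1 (phiL l3 (η3 t) - phiL l1 (η1 t)) (Set.Ici 0) t := by
    rw [funext hz1]
    exact ((hd3 t ht).fun_sub (hd2 t ht)).congr_deriv (by ring)
  have hdz2 : HasDerivWithinAt z2
      (ustar - u t - phiL l2 (η2 t) + phiL l1 (η1 t) - phiL l3 (η3 t)) (Set.Ici 0) t := by
    rw [funext hz2]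
    exact ((hd1 t ht).fun_sub hdz1).congr_deriv (by ring)
  refine ((((hd2 t ht).const_mul_omegaTilde (θ * l2)).fun_add
    (hdz1.const_mul_omegaTilde (θ * l3))).fun_add (hdz2.const_mul_omegaTilde l1)).congr_deriv ?_
  rw [phiL_mul_left, phiL_mul_left, hu t]
  linear_combination backstepping_rate_eq θ c1 c2 c3 ustar (phiL l1 (z2 t)) (phiL l2 (η2 t))
    (phiL l3 (z1 t)) (phiL l1 (η1 t)) (phiL l3 (η3 t)) (hne t ht)

/-- Lyapunov dissipation identity of Theorem 3.3 (three-species non-transitive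
competition, `ψᵢ ≡ 0`): along the closed loop with the backstepping control `u`,
`d/dt V₃(η₂, z₁, z₂) = −θc₁φ₂(η₂)² − θc₂φ₃(z₁)² − c₃φ₁(z₂)²`. -/
theorem stmt2 (l1 l2 l3 θ c1 c2 c3 ustar : ℝ)
    (hl1 : 0 < l1) (hl2 : 0 < l2) (hl3 : 0 < l3) (hθ : 0 < θ)
    (hc1 : 0 < c1) (hc2 : 0 < c2) (hc3 : 0 < c3)
    (η1 η2 η3 z1 z2 u : ℝ → ℝ)
    (hz1 : ∀ t, z1 t = η3 t - η2 t)
    (hz2 : ∀ t, z2 t = η1 t - z1 t)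
    (hne : ∀ t, 0 ≤ t → phiL l1 (z2 t) ≠ 0)
    (hu : ∀ t, u t = ustar
      + (1 / phiL l1 (z2 t)) *
          (c3 * (phiL l1 (z2 t))^2 + θ * c1 * (phiL l2 (η2 t))^2
            + θ * c2 * (phiL l3 (z1 t))^2)
      + ((phiL l1 (z2 t) - θ * phiL l3 (z1 t)) / phiL l1 (z2 t)) * phiL l1 (η1 t)
      - phiL l2 (η2 t)
      + ((θ * phiL l3 (z1 t) - phiL l1 (z2 t) - θ * phiL l2 (η2 t)) / phiL l1 (z2 t))
          * phiL l3 (η3 t))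
    (hd1 : ∀ t, 0 ≤ t →
      HasDerivWithinAt η1 (ustar - u t - phiL l2 (η2 t)) (Set.Ici 0) t)
    (hd2 : ∀ t, 0 ≤ t →
      HasDerivWithinAt η2 (-(phiL l3 (η3 t))) (Set.Ici 0) t)
    (hd3 : ∀ t, 0 ≤ t →
      HasDerivWithinAt η3 (-(phiL l1 (η1 t))) (Set.Ici 0) t) :
    ∀ t, 0 ≤ t → HasDerivWithinAt
      (fun s => θ * l2 * omegaTilde (η2 s) + θ * l3 * omegaTilde (z1 s)
        + l1 * omegaTilde (z2 s))
      (-(θ * c1 * (phiL l2 (η2 t))^2) - θ * c2 * (phiL l3 (z1 t))^2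
        - c3 * (phiL l1 (z2 t))^2)
      (Set.Ici 0) t :=
  stmt2_general l1 l2 l3 θ c1 c2 c3 ustar η1 η2 η3 z1 z2 u hz1 hz2 hne hu hd1 hd2 hd3
end

section
/- Let λ₁, λ₂, λ₃, λ₄ > 0, θ > 0, c₁, c₂, c₃, c₄ > 0, u* ∈ ℝ, and write φᵢ = φ_{λᵢ} where φ_λ(x) = λ(e^x − 1). Let η₁, η₂, η₃, η₄ : [0,∞) → ℝ be differentiable, let φ̂₁, φ̂₂, φ̂₃, φ̂₄ : [0,∞) → ℝ be arbitrary functions, and set z₁ = η₃ − η₂, z₂ = η₄ − z₁, z₃ = η₁ − z₂. Assume φ₁(z₃(t)) ≠ 0 for all t and that the perturbed closed-loop system η₁′ = u* − u − φ̂₂, η₂′ = −φ̂₃, η₃′ = −φ̂₄, η₄′ = −φ̂₁ holds with u = u* + (1/φ₁(z₃))·(c₄·φ₁(z₃)² + θc₁·φ₂(η₂)² + θc₃·φ₄(z₂)² + θc₂·φ₃(z₁)²) + ((φ₁(z₃) − θφ₄(z₂))/φ₁(z₃))·φ₁(η₁) − φ₂(η₂) + ((φ₁(z₃) − θφ₄(z₂)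 + θφ₃(z₁) − θφ₂(η₂))/φ₁(z₃))·φ₃(η₃) + ((θφ₄(z₂) − φ₁(z₃) − θφ₃(z₁))/φ₁(z₃))·φ₄(η₄). Then, with V₄(η₂, z₁, z₂, z₃) = θλ₂ω̃(η₂) + θλ₃ω̃(z₁) + θλ₄ω̃(z₂) + λ₁ω̃(z₃), ω̃(x) = e^x − 1 − x, one has d/dt V₄ = −θc₁·φ₂(η₂)² − θc₂·φ₃(z₁)² − θc₃·φ₄(z₂)² − c₄·φ₁(z₃)² + A₁·(φ̂₁ − φ₁(η₁)) + A₂·(φ̂₂ − φ₂(η₂)) + A₃·(φ̂₃ − φ₃(η₃)) + A₄·(φ̂₄ − φ₄(η₄)), where A₁ = φ₁(z₃) − θφ₄(z₂), A₂ = −φ₁(z₃), A₃ = φ₁(z₃) − θφ₄(z₂) + θφ₃(z₁) − θφ₂(η₂), A₄ = θφ₄(z₂) − φ₁(z₃) − θφ₃(z₁). -/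
/-!
Each term `λ ω̃(x)` of `V₄` has derivative `φ_λ(x) x'`, so by the chain rule `d/dt V₄` is affine
in `u` and the `φ̂ᵢ`, the coefficient of `φ̂ᵢ` being `Aᵢ`. The feedback is chosen so that
`φ₁(z₃) (u* − u)` is the damping `−θc₁φ₂(η₂)² − ⋯ − c₄φ₁(z₃)²` minus `∑ Aᵢ φᵢ(ηᵢ)`, which is
checked after clearing the denominator `φ₁(z₃) ≠ 0`.
-/

theorem phiL_mul (a l x : ℝ) : phiL (a * l) x = a * phiL l x := by
  unfold phiL
  ring

theorem hasDerivAt_const_mul_omegaTilde (l x : ℝ) :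
    HasDerivAt (fun y => l * omegaTilde y) (phiL l x) x := by
  have h := (((Real.hasDerivAt_exp x).sub_const 1).sub (hasDerivAt_id x)).const_mul l
  simpa [omegaTilde, phiL] using h

theorem HasDerivWithinAt.const_mul_omegaTilde_comp {f : ℝ → ℝ} {f' x : ℝ} {s : Set ℝ}
    (l : ℝ) (hf : HasDerivWithinAt f f' s x) :
    HasDerivWithinAt (fun y => l * omegaTilde (f y)) (phiL l (f x) * f') s x :=
  (hasDerivAt_const_mul_omegaTilde l (f x)).comp_hasDerivWithinAt x hf

theorem mul_sub_feedback {P K A₁ A₃ A₄ f₁ f₂ f₃ f₄ u ustar : ℝ} (hP : P ≠ 0)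
    (hu : u = ustar + 1 / P * K + A₁ / P * f₁ - f₂ + A₃ / P * f₃ + A₄ / P * f₄) :
    P * (ustar - u) = -K - A₁ * f₁ + P * f₂ - A₃ * f₃ - A₄ * f₄ := by
  rw [hu]
  field_simp
  ring

theorem stmt5_general (l1 l2 l3 l4 θ c1 c2 c3 c4 ustar : ℝ)
    (η1 η2 η3 η4 z1 z2 z3 u : ℝ → ℝ)
    (phat1 phat2 phat3 phat4 : ℝ → ℝ)
    (hz1 : ∀ t, z1 t = η3 t - η2 t)
    (hz2 : ∀ t, z2 t = η4 t - z1 t)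
    (hz3 : ∀ t, z3 t = η1 t - z2 t)
    (hne : ∀ t, 0 ≤ t → phiL l1 (z3 t) ≠ 0)
    (hu : ∀ t, u t = ustar
      + (1 / phiL l1 (z3 t)) *
          (c4 * (phiL l1 (z3 t))^2 + θ * c1 * (phiL l2 (η2 t))^2
            + θ * c3 * (phiL l4 (z2 t))^2 + θ * c2 * (phiL l3 (z1 t))^2)
      + ((phiL l1 (z3 t) - θ * phiL l4 (z2 t)) / phiL l1 (z3 t)) * phiL l1 (η1 t)
      - phiL l2 (η2 t)
      + ((phiL l1 (z3 t) - θ * phiL l4 (z2 t) + θ * phiL l3 (z1 t)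
            - θ * phiL l2 (η2 t)) / phiL l1 (z3 t)) * phiL l3 (η3 t)
      + ((θ * phiL l4 (z2 t) - phiL l1 (z3 t) - θ * phiL l3 (z1 t))
            / phiL l1 (z3 t)) * phiL l4 (η4 t))
    (hd1 : ∀ t, 0 ≤ t →
      HasDerivWithinAt η1 (ustar - u t - phat2 t) (Set.Ici 0) t)
    (hd2 : ∀ t, 0 ≤ t →
      HasDerivWithinAt η2 (-(phat3 t)) (Set.Ici 0) t)
    (hd3 : ∀ t, 0 ≤ t →
      HasDerivWithinAt η3 (-(phat4 t)) (Set.Ici 0) t)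
    (hd4 : ∀ t, 0 ≤ t →
      HasDerivWithinAt η4 (-(phat1 t)) (Set.Ici 0) t) :
    ∀ t, 0 ≤ t → HasDerivWithinAt
      (fun s => θ * l2 * omegaTilde (η2 s) + θ * l3 * omegaTilde (z1 s)
        + θ * l4 * omegaTilde (z2 s) + l1 * omegaTilde (z3 s))
      (-(θ * c1 * (phiL l2 (η2 t))^2) - θ * c2 * (phiL l3 (z1 t))^2
        - θ * c3 * (phiL l4 (z2 t))^2 - c4 * (phiL l1 (z3 t))^2
        + (phiL l1 (z3 t) - θ * phiL l4 (z2 t)) * (phat1 t - phiL l1 (η1 t))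
        + (-(phiL l1 (z3 t))) * (phat2 t - phiL l2 (η2 t))
        + (phiL l1 (z3 t) - θ * phiL l4 (z2 t) + θ * phiL l3 (z1 t)
            - θ * phiL l2 (η2 t)) * (phat3 t - phiL l3 (η3 t))
        + (θ * phiL l4 (z2 t) - phiL l1 (z3 t) - θ * phiL l3 (z1 t))
            * (phat4 t - phiL l4 (η4 t)))
      (Set.Ici 0) t := by
  intro t ht
  obtain rfl : z1 = η3 - η2 := funext hz1
  obtain rfl : z2 = η4 - (η3 - η2) := funext hz2
  obtain rfl : z3 = η1 - (η4 - (η3 - η2)) := funext hz3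
  have hdz1 := (hd3 t ht).sub (hd2 t ht)
  have hdz2 := (hd4 t ht).sub hdz1
  have hdz3 := (hd1 t ht).sub hdz2
  have hV := ((((hd2 t ht).const_mul_omegaTilde_comp (θ * l2)).add
    (hdz1.const_mul_omegaTilde_comp (θ * l3))).add
    (hdz2.const_mul_omegaTilde_comp (θ * l4))).add (hdz3.const_mul_omegaTilde_comp l1)
  refine hV.congr_deriv ?_
  rw [phiL_mul, phiL_mul, phiL_mul]
  linear_combination mul_sub_feedback (hne t ht) (hu t)

/-- Lyapunov derivative identity at the heart of Proposition 3.18 (four-species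
non-transitive competition with nonzero internal dynamics): for the perturbed
closed loop with arbitrary `φ̂ᵢ`,
`d/dt V₄ = −θc₁φ₂(η₂)² − θc₂φ₃(z₁)² − θc₃φ₄(z₂)² − c₄φ₁(z₃)²
  + ∑ᵢ Aᵢ(φ̂ᵢ − φᵢ(ηᵢ))`. -/
theorem stmt5 (l1 l2 l3 l4 θ c1 c2 c3 c4 ustar : ℝ)
    (hl1 : 0 < l1) (hl2 : 0 < l2) (hl3 : 0 < l3) (hl4 : 0 < l4) (hθ : 0 < θ)
    (hc1 : 0 < c1) (hc2 : 0 < c2) (hc3 : 0 < c3) (hc4 : 0 < c4)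
    (η1 η2 η3 η4 z1 z2 z3 u : ℝ → ℝ)
    (phat1 phat2 phat3 phat4 : ℝ → ℝ)
    (hz1 : ∀ t, z1 t = η3 t - η2 t)
    (hz2 : ∀ t, z2 t = η4 t - z1 t)
    (hz3 : ∀ t, z3 t = η1 t - z2 t)
    (hne : ∀ t, 0 ≤ t → phiL l1 (z3 t) ≠ 0)
    (hu : ∀ t, u t = ustar
      + (1 / phiL l1 (z3 t)) *
          (c4 * (phiL l1 (z3 t))^2 + θ * c1 * (phiL l2 (η2 t))^2
            + θ * c3 * (phiL l4 (z2 t))^2 + θ * c2 * (phiL l3 (z1 t))^2)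
      + ((phiL l1 (z3 t) - θ * phiL l4 (z2 t)) / phiL l1 (z3 t)) * phiL l1 (η1 t)
      - phiL l2 (η2 t)
      + ((phiL l1 (z3 t) - θ * phiL l4 (z2 t) + θ * phiL l3 (z1 t)
            - θ * phiL l2 (η2 t)) / phiL l1 (z3 t)) * phiL l3 (η3 t)
      + ((θ * phiL l4 (z2 t) - phiL l1 (z3 t) - θ * phiL l3 (z1 t))
            / phiL l1 (z3 t)) * phiL l4 (η4 t))
    (hd1 : ∀ t, 0 ≤ t →
      HasDerivWithinAt η1 (ustar - u t - phat2 t) (Set.Ici 0) t)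
    (hd2 : ∀ t, 0 ≤ t →
      HasDerivWithinAt η2 (-(phat3 t)) (Set.Ici 0) t)
    (hd3 : ∀ t, 0 ≤ t →
      HasDerivWithinAt η3 (-(phat4 t)) (Set.Ici 0) t)
    (hd4 : ∀ t, 0 ≤ t →
      HasDerivWithinAt η4 (-(phat1 t)) (Set.Ici 0) t) :
    ∀ t, 0 ≤ t → HasDerivWithinAt
      (fun s => θ * l2 * omegaTilde (η2 s) + θ * l3 * omegaTilde (z1 s)
        + θ * l4 * omegaTilde (z2 s) + l1 * omegaTilde (z3 s))
      (-(θ * c1 * (phiL l2 (η2 t))^2) - θ * c2 * (phiL l3 (z1 t))^2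
        - θ * c3 * (phiL l4 (z2 t))^2 - c4 * (phiL l1 (z3 t))^2
        + (phiL l1 (z3 t) - θ * phiL l4 (z2 t)) * (phat1 t - phiL l1 (η1 t))
        + (-(phiL l1 (z3 t))) * (phat2 t - phiL l2 (η2 t))
        + (phiL l1 (z3 t) - θ * phiL l4 (z2 t) + θ * phiL l3 (z1 t)
            - θ * phiL l2 (η2 t)) * (phat3 t - phiL l3 (η3 t))
        + (θ * phiL l4 (z2 t) - phiL l1 (z3 t) - θ * phiL l3 (z1 t))
            * (phat4 t - phiL l4 (η4 t)))
      (Set.Ici 0) t :=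
  stmt5_general l1 l2 l3 l4 θ c1 c2 c3 c4 ustar η1 η2 η3 η4 z1 z2 z3 u phat1 phat2 phat3 phat4 hz1
    hz2 hz3 hne hu hd1 hd2 hd3 hd4
end

section
/- Let c > 0 and let z : [0,∞) → ℝ be differentiable with z′(t) = −c·(e^{z(t)} − 1) for all t ≥ 0. Then the function t ↦ e^{z(t)} − z(t) − 1 is nonincreasing on [0,∞), and z(t) → 0 as t → ∞. -/
open Filter

/-- Asymptotic convergence claim of Lemma B.1: for `z′ = −c(e^z − 1)` with
`c > 0`, the Lyapunov function `t ↦ e^{z(t)} − z(t) − 1` is nonincreasing on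
`[0,∞)`, and `z(t) → 0` as `t → ∞`. -/
theorem stmt8 (c : ℝ) (hc : 0 < c) (z : ℝ → ℝ)
    (hz : ∀ t, 0 ≤ t →
      HasDerivWithinAt z (-c * (Real.exp (z t) - 1)) (Set.Ici 0) t) :
    AntitoneOn (fun t => Real.exp (z t) - z t - 1) (Set.Ici 0) ∧
    Tendsto z atTop (nhds 0) := by
  have hzcont : ContinuousOn z (Set.Ici 0) := fun t ht =>
    (hz t ht).continuousWithinAt
  constructor
  · -- Antitone part
    refine antitoneOn_of_hasDerivWithinAt_nonpos (convex_Ici 0)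
      (by fun_prop) (f' := fun t => (Real.exp (z t) - 1) * (-c * (Real.exp (z t) - 1)))
      (fun t ht => ?_) (fun t ht => ?_)
    · rw [interior_Ici] at ht ⊢
      have h1 := ((hz t (le_of_lt ht)).exp.sub (hz t (le_of_lt ht))).sub_const 1
      have h2 : Real.exp (z t) * (-c * (Real.exp (z t) - 1)) - -c * (Real.exp (z t) - 1)
          = (Real.exp (z t) - 1) * (-c * (Real.exp (z t) - 1)) := by ring
      rw [h2] at h1
      exact h1.mono Set.Ioi_subset_Ici_self
    · show (Real.exp (z t) - 1) * (-c * (Real.exp (z t) - 1)) ≤ 0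
      nlinarith [mul_nonneg hc.le (sq_nonneg (Real.exp (z t) - 1))]
  · -- Convergence part
    set v : ℝ → ℝ := fun t => (1 - Real.exp (-(z t))) * Real.exp (c * t) with hv
    have hvderiv : ∀ t ∈ Set.Ici (0:ℝ), HasDerivWithinAt v 0 (Set.Ici 0) t := by
      intro t ht
      have h1 : HasDerivWithinAt (fun t => 1 - Real.exp (-(z t)))
          (-(Real.exp (-(z t)) * -(-c * (Real.exp (z t) - 1)))) (Set.Ici 0) t :=
        (((hz t ht).neg).exp).const_sub 1
      have h2 : HasDerivWithinAt (fun t => Real.exp (c * t))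
          (Real.exp (c * t) * c) (Set.Ici 0) t :=
        (((hasDerivAt_id t).const_mul c).exp.hasDerivWithinAt).congr_deriv (by simp)
      have h3 := h1.mul h2
      have h4 : (-(Real.exp (-(z t)) * -(-c * (Real.exp (z t) - 1)))) * Real.exp (c * t)
          + (1 - Real.exp (-(z t))) * (Real.exp (c * t) * c) = 0 := by
        rw [Real.exp_neg]
        field_simp
        ring
      rw [h4] at h3
      exact h3
    have hvconst : ∀ t ∈ Set.Ici (0:ℝ), v t = v 0 := by
      intro t ht
      have := (convex_Ici (0:ℝ)).is_const_of_fderivWithin_eq_zero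
        (f := v) (fun s hs => (hvderiv s hs).differentiableWithinAt)
        (fun s hs => by
          have := (hvderiv s hs).hasFDerivWithinAt.fderivWithin
            ((uniqueDiffOn_Ici 0) s hs)
          rw [this]; exact ContinuousLinearMap.ext fun x => by simp)
        ht (Set.self_mem_Ici)
      exact this
    -- exp (-(z t)) = 1 - v 0 * exp (-(c * t)) for t ≥ 0
    have key : ∀ t : ℝ, 0 ≤ t →
        Real.exp (-(z t)) = 1 - v 0 * Real.exp (-(c * t)) := by
      intro t ht
      have h := hvconst t ht
      have hv0 : v 0 = (1 - Real.exp (-(z t))) * Real.exp (c * t) := by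
        rw [← h]
      have hee : Real.exp (c * t) * Real.exp (-(c * t)) = 1 := by
        rw [← Real.exp_add]; simp
      rw [hv0, mul_assoc, hee, mul_one]; ring
    have hexp0 : Tendsto (fun t => Real.exp (-(c * t))) atTop (nhds 0) := by
      have : Tendsto (fun t : ℝ => c * t) atTop atTop :=
        tendsto_atTop_atTop_of_monotone' (fun a b hab => by nlinarith)
          (by
            rintro ⟨B, hB⟩
            have := hB (Set.mem_range_self ((|B| + 1) / c))
            have h1 : c * ((|B| + 1) / c) = |B| + 1 := by field_simp
            rw [h1] at this
            have := le_abs_self B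
            linarith)
      exact Real.tendsto_exp_atBot.comp (tendsto_neg_atBot_iff.mpr this)
    have hto1 : Tendsto (fun t => Real.exp (-(z t))) atTop (nhds 1) := by
      have h2 : Tendsto (fun t => 1 - v 0 * Real.exp (-(c * t))) atTop (nhds 1) := by
        have := (hexp0.const_mul (v 0)).const_sub 1
        simpa using this
      refine h2.congr' ?_
      filter_upwards [eventually_ge_atTop (0:ℝ)] with t ht
      exact (key t ht).symm
    have hlog : Tendsto (fun t => Real.log (Real.exp (-(z t)))) atTop
        (nhds (Real.log 1)) := (Real.continuousAt_log one_ne_zero).tendsto.comp hto1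
    simp only [Real.log_exp, Real.log_one] at hlog
    simpa using hlog.neg
end

section
/- Let λ₁, λ₂, λ₃ > 0 and consider the real 3×3 matrix J = [[0, −λ₂, 0], [0, 0, −λ₃], [−λ₁, 0, 0]]. Then the characteristic polynomial of J is X³ + λ₁λ₂λ₃, the complex eigenvalues of J are exactly the three complex cube roots of −λ₁λ₂λ₃, i.e. μ_k = −(λ₁λ₂λ₃)^{1/3}·e^{2πik/3} for k ∈ {0,1,2}, and J has a complex eigenvalue with strictly positive real part (namely (λ₁λ₂λ₃)^{1/3}·e^{iπ/3}, with real part (λ₁λ₂λ₃)^{1/3}/2 > 0). Consequently the equilibrium 0 of the linearized system η′ = Jη is not asymptotically stable. -/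
/-!
The characteristic polynomial of `J` is `X³ + λ₁λ₂λ₃` (expand the determinant), so its complex
eigenvalues are the cube roots of `-λ₁λ₂λ₃`; with `c = (λ₁λ₂λ₃)^{1/3}` one of them is `c e^{iπ/3}`,
whose real part is `c / 2 > 0`.

Instability holds for any real matrix `A` with an eigenvalue `μ`, `Re μ ≥ 0`, of its
complexification: for an eigenvector `v`, the real and imaginary parts of `e^{μt} v` solve
`η' = Aη`, and since `‖e^{μt} v‖ = e^{t Re μ} ‖v‖ ≥ ‖v‖` they cannot both tend to `0`.
By linearity such a solution may be rescaled to start in any ball around the origin.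
-/

open Filter Polynomial Topology Complex
open scoped Real Matrix

theorem Complex.pow_eq_pow_iff_mem_range {n : ℕ} (hn : n ≠ 0) (w z : ℂ) :
    z ^ n = w ^ n ↔ z ∈ Set.range fun k : Fin n => w * cexp (2 * π * I * (k : ℕ) / n) := by
  rcases eq_or_ne w 0 with rfl | hw
  · have : Nonempty (Fin n) := ⟨⟨0, Nat.pos_of_ne_zero hn⟩⟩
    simp [zero_pow hn, pow_eq_zero_iff hn]
  constructor
  · intro h
    have : NeZero n := ⟨hn⟩
    obtain ⟨k, hk, hpow⟩ := (isPrimitiveRoot_exp n hn).eq_pow_of_pow_eq_one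
      (show (z / w) ^ n = 1 by rw [div_pow, h, div_self (pow_ne_zero n hw)])
    refine ⟨⟨k, hk⟩, ?_⟩
    rw [eq_div_iff hw] at hpow
    rw [← hpow, ← exp_nat_mul]
    ring_nf
  · rintro ⟨k, rfl⟩
    have hn' : (n : ℂ) ≠ 0 := by exact_mod_cast hn
    rw [mul_pow, ← exp_nat_mul, mul_div_cancel₀ _ hn', mul_comm _ ((k : ℕ) : ℂ),
      exp_nat_mul_two_pi_mul_I, mul_one]

namespace Matrix

theorem charpoly_fin_three_cyclic {R : Type*} [CommRing R] (a b c : R) :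
    (!![0, a, 0; 0, 0, b; c, 0, 0] : Matrix (Fin 3) (Fin 3) R).charpoly =
      X ^ 3 - C (a * b * c) := by
  rw [charpoly, det_fin_three]
  simp
  ring

theorem exists_mulVec_eq_smul_of_mem_spectrum {K n : Type*} [Field K] [Fintype n]
    [DecidableEq n] {M : Matrix n n K} {μ : K} (h : μ ∈ spectrum K M) :
    ∃ v ≠ 0, M *ᵥ v = μ • v := by
  rw [← spectrum_toLin', ← Module.End.hasEigenvalue_iff_mem_spectrum] at h
  obtain ⟨v, hv⟩ := h.exists_hasEigenvector
  exact ⟨v, hv.2, by simpa using hv.apply_eq_smul⟩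

variable {n : Type*} [Fintype n] (A : Matrix n n ℝ)

theorem re_map_ofReal_mulVec (w : n → ℂ) (i : n) :
    (((A.map ofReal) *ᵥ w) i).re = (A *ᵥ fun j => (w j).re) i := by
  simp [mulVec, dotProduct, re_sum]

theorem hasDerivAt_re_cexp_mul_eigenvector {μ : ℂ} {v : n → ℂ}
    (hv : (A.map ofReal) *ᵥ v = μ • v) (t : ℝ) :
    HasDerivAt (fun s : ℝ => fun i => (cexp (μ * s) * v i).re)
      (A *ᵥ fun i => (cexp (μ * t) * v i).re) t := by
  refine hasDerivAt_pi.2 fun i => ?_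
  have hw : (A.map ofReal) *ᵥ (cexp (μ * t) • v) = μ • cexp (μ * t) • v := by
    rw [mulVec_smul, hv, smul_comm]
  have h := (((hasDerivAt_id (t : ℂ)).const_mul μ).cexp.mul_const (v i)).real_of_complex
  simp only [id, mul_one] at h
  refine h.congr_deriv ?_
  rw [← re_map_ofReal_mulVec, show (fun j => cexp (μ * t) * v j) = cexp (μ * t) • v from rfl, hw]
  simp only [Pi.smul_apply, smul_eq_mul]
  ring_nf

theorem exists_solution_not_tendsto_zero [DecidableEq n] {μ : ℂ}
    (hμ : μ ∈ spectrum ℂ (A.map ofReal)) (hre : 0 ≤ μ.re) :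
    ∃ η : ℝ → n → ℝ, (∀ t, HasDerivAt η (A *ᵥ η t) t) ∧ ¬ Tendsto η atTop (𝓝 0) := by
  obtain ⟨v, hv0, hv⟩ := exists_mulVec_eq_smul_of_mem_spectrum hμ
  set sol : (n → ℂ) → ℝ → n → ℝ := fun w s i => (cexp (μ * s) * w i).re
  have hsol : ∀ w, A.map ofReal *ᵥ w = μ • w → ∀ t, HasDerivAt (sol w) (A *ᵥ sol w t) t :=
    fun w hw => hasDerivAt_re_cexp_mul_eigenvector A hw
  by_contra! hstable
  have hx := hstable (sol v) (hsol v hv)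
  -- `(e^{μs} (-I v)).re` is the imaginary part of `e^{μs} v`
  have hy := hstable (sol (-I • v)) (hsol _ (by rw [mulVec_smul, hv, smul_comm]))
  have hbound : ∀ s : ℝ, 0 ≤ s → ‖v‖ ≤ ‖sol v s‖ + ‖sol (-I • v) s‖ := by
    intro s hs
    calc ‖v‖ ≤ ‖cexp (μ * s) • v‖ := by
          rw [norm_smul, norm_exp]
          exact le_mul_of_one_le_left (norm_nonneg _) (Real.one_le_exp (by simp; positivity))
      _ ≤ ‖sol v s‖ + ‖sol (-I • v) s‖ := by
          refine pi_norm_le_iff_of_nonneg (by positivity) |>.2 fun i => ?_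
          calc ‖(cexp (μ * s) • v) i‖ ≤ ‖sol v s i‖ + ‖sol (-I • v) s i‖ := by
                convert norm_le_abs_re_add_abs_im _ using 3 <;> simp [sol]
            _ ≤ _ := add_le_add (norm_le_pi_norm (sol v s) i) (norm_le_pi_norm _ i)
  have hlim : Tendsto (fun s => ‖sol v s‖ + ‖sol (-I • v) s‖) atTop (𝓝 0) := by
    simpa using hx.norm.add hy.norm
  exact hv0 (norm_le_zero_iff.1 (ge_of_tendsto hlim (eventually_ge_atTop 0 |>.mono hbound)))

theorem exists_small_solution_not_tendsto_zero {η : ℝ → n → ℝ}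
    (hη : ∀ t, HasDerivAt η (A *ᵥ η t) t) (hlim : ¬ Tendsto η atTop (𝓝 0)) {δ : ℝ}
    (hδ : 0 < δ) :
    ∃ ξ : ℝ → n → ℝ, (∀ t, HasDerivAt ξ (A *ᵥ ξ t) t) ∧ ‖ξ 0‖ < δ ∧ ¬ Tendsto ξ atTop (𝓝 0) := by
  set ε := δ / (‖η 0‖ + 1)
  have hε : 0 < ε := by positivity
  refine ⟨ε • η, fun t => ?_, ?_, fun h => hlim ?_⟩
  · simpa [mulVec_smul] using (hη t).const_smul ε
  · calc ‖(ε • η) 0‖ = ε * ‖η 0‖ := by simp [norm_smul, abs_of_pos hε]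
      _ < ε * (‖η 0‖ + 1) := by gcongr; linarith
      _ = δ := div_mul_cancel₀ δ (by positivity)
  · simpa [smul_smul, inv_mul_cancel₀ hε.ne'] using h.const_smul ε⁻¹

theorem not_asymptotically_stable_of_mem_spectrum [DecidableEq n] {μ : ℂ}
    (hμ : μ ∈ spectrum ℂ (A.map ofReal)) (hre : 0 ≤ μ.re) {δ : ℝ} (hδ : 0 < δ) :
    ∃ η : ℝ → n → ℝ, (∀ t, HasDerivAt η (A *ᵥ η t) t) ∧ ‖η 0‖ < δ ∧ ¬ Tendsto η atTop (𝓝 0) := by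
  obtain ⟨η, hη, hlim⟩ := exists_solution_not_tendsto_zero A hμ hre
  exact exists_small_solution_not_tendsto_zero A hη hlim hδ

end Matrix

/-- The Jacobian at the origin of the reduced three-species non-transitive
competition system under the static control `u = u*`:
`J = [[0, −λ₂, 0], [0, 0, −λ₃], [−λ₁, 0, 0]]` has characteristic polynomial
`X³ + λ₁λ₂λ₃`, its complex eigenvalues are exactly the three cube roots
`μ_k = −(λ₁λ₂λ₃)^{1/3} e^{2πik/3}`, one of them (namely
`(λ₁λ₂λ₃)^{1/3} e^{iπ/3}`) has strictly positive real part, and hence the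
equilibrium `0` of `η′ = Jη` is not asymptotically stable. -/
theorem stmt9 (l1 l2 l3 : ℝ) (hl1 : 0 < l1) (hl2 : 0 < l2) (hl3 : 0 < l3)
    (J : Matrix (Fin 3) (Fin 3) ℝ)
    (hJ : J = !![0, -l2, 0; 0, 0, -l3; -l1, 0, 0]) :
    J.charpoly = X ^ 3 + C (l1 * l2 * l3) ∧
    spectrum ℂ (J.map (fun x : ℝ => (x : ℂ))) =
      Set.range (fun k : Fin 3 =>
        -((((l1 * l2 * l3) ^ ((1 : ℝ) / 3) : ℝ) : ℂ)) *
          Complex.exp (2 * Real.pi * Complex.I * (k : ℕ) / 3)) ∧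
    ((((l1 * l2 * l3) ^ ((1 : ℝ) / 3) : ℝ) : ℂ) *
        Complex.exp (Real.pi * Complex.I / 3)
      ∈ spectrum ℂ (J.map (fun x : ℝ => (x : ℂ))) ∧
      ((((l1 * l2 * l3) ^ ((1 : ℝ) / 3) : ℝ) : ℂ) *
        Complex.exp (Real.pi * Complex.I / 3)).re
        = (l1 * l2 * l3) ^ ((1 : ℝ) / 3) / 2 ∧
      0 < ((((l1 * l2 * l3) ^ ((1 : ℝ) / 3) : ℝ) : ℂ) *
        Complex.exp (Real.pi * Complex.I / 3)).re) ∧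
    (∀ δ : ℝ, 0 < δ → ∃ η : ℝ → (Fin 3 → ℝ),
      (∀ t : ℝ, HasDerivAt η (J.mulVec (η t)) t) ∧ ‖η 0‖ < δ ∧
      ¬ Tendsto η atTop (nhds 0)) := by
  have hk : 0 < l1 * l2 * l3 := by positivity
  set c : ℝ := (l1 * l2 * l3) ^ ((1 : ℝ) / 3) with hc_def
  have hc : 0 < c := by positivity
  have hc3 : c ^ 3 = l1 * l2 * l3 := by
    rw [hc_def, one_div, show (3 : ℝ) = (3 : ℕ) by norm_num,
      Real.rpow_inv_natCast_pow hk.le three_ne_zero]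
  have hch : J.charpoly = X ^ 3 + C (l1 * l2 * l3) := by
    rw [hJ, Matrix.charpoly_fin_three_cyclic, sub_eq_add_neg, ← C_neg]
    ring_nf
  have hspec : ∀ z, z ∈ spectrum ℂ (J.map (fun x : ℝ => (x : ℂ))) ↔ z ^ 3 = (-(c : ℂ)) ^ 3 := by
    intro z
    rw [Matrix.mem_spectrum_iff_isRoot_charpoly,
      show J.map (fun x : ℝ => (x : ℂ)) = J.map ofRealHom from rfl, Matrix.charpoly_map, hch]
    simp [Odd.neg_pow (by decide : Odd 3), ← hc3, eq_neg_iff_add_eq_zero]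
  have hre : ((c : ℂ) * cexp (π * I / 3)).re = c / 2 := by
    rw [show π * I / 3 = ((π / 3 : ℝ) : ℂ) * I by push_cast; ring, re_ofReal_mul,
      exp_ofReal_mul_I_re, Real.cos_pi_div_three]
    ring
  have hμ : (c : ℂ) * cexp (π * I / 3) ∈ spectrum ℂ (J.map (fun x : ℝ => (x : ℂ))) := by
    rw [hspec, mul_pow, ← exp_nat_mul,
      show ((3 : ℕ) : ℂ) * (π * I / 3) = π * I by push_cast; ring, exp_pi_mul_I]
    ring
  have hre_pos : 0 < ((c : ℂ) * cexp (π * I / 3)).re := hre ▸ half_pos hc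
  refine ⟨hch, Set.ext fun z => ?_, ⟨hμ, hre, hre_pos⟩, fun δ hδ =>
    Matrix.not_asymptotically_stable_of_mem_spectrum J hμ hre_pos.le hδ⟩
  rw [hspec, pow_eq_pow_iff_mem_range three_ne_zero]
  norm_num
end

section
/- Let T > 0, B ≥ 0, m ∈ ℝ, and let k : [0,T] × [0,T] → ℝ be continuous with |k(a,t)| ≤ B·e^{−m·a} for all (a,t). Let F ∈ C([0,T], ℝ) and define 𝓕 : C([0,T], ℝ) → C([0,T], ℝ) by (𝓕b)(t) = F(t) + ∫₀^t k(t−s, t)·b(s) ds. For λ ∈ ℝ with m + λ > 0, equip C([0,T], ℝ) with the weighted norm ‖b‖_λ = sup_{t∈[0,T]} e^{−λt}|b(t)| (equivalent to the sup norm). Then for all b₁, b₂: ‖𝓕b₁ − 𝓕b₂‖_λ ≤ (B/(m + λ))·‖b₁ − b₂‖_λ. In particular, if λ is chosen so large that B < m + λ, then 𝓕 is a contraction and admits a unique fixed point b ∈ C([0,T], ℝ). -/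
open Filter MeasureTheory
section Stmt11Aux
open Set intervalIntegral

lemma stmt11_cont_aux {T : ℝ} (k : ℝ → ℝ → ℝ)
    (hk_cont : ContinuousOn (fun p : ℝ × ℝ => k p.1 p.2)
      (Set.Icc 0 T ×ˢ Set.Icc 0 T))
    (b : ℝ → ℝ) (hb : ContinuousOn b (Set.Icc 0 T)) {t : ℝ}
    (ht : t ∈ Set.Icc (0:ℝ) T) :
    ContinuousOn (fun s => k (t - s) t * b s) (Set.Icc 0 t) := by
  obtain ⟨ht0, htT⟩ := ht
  have hsub : Set.Icc (0:ℝ) t ⊆ Set.Icc 0 T := Set.Icc_subset_Icc le_rfl htT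
  have hkc : ContinuousOn (fun s => k (t - s) t) (Set.Icc 0 t) := by
    have hmap : ContinuousOn (fun s : ℝ => ((t - s, t) : ℝ × ℝ)) (Set.Icc 0 t) :=
      (Continuous.continuousOn (by continuity))
    refine hk_cont.comp hmap ?_
    intro s hs
    simp only [Set.mem_prod, Set.mem_Icc]
    refine ⟨⟨by linarith [hs.2], by linarith [hs.1]⟩, ht0, htT⟩
  exact hkc.mul (hb.mono hsub)

lemma stmt11_int_aux {T : ℝ} (k : ℝ → ℝ → ℝ)
    (hk_cont : ContinuousOn (fun p : ℝ × ℝ => k p.1 p.2)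
      (Set.Icc 0 T ×ˢ Set.Icc 0 T))
    (b : ℝ → ℝ) (hb : ContinuousOn b (Set.Icc 0 T)) {t : ℝ}
    (ht : t ∈ Set.Icc (0:ℝ) T) :
    IntervalIntegrable (fun s => k (t - s) t * b s) volume 0 t := by
  apply ContinuousOn.intervalIntegrable
  rw [Set.uIcc_of_le ht.1]
  exact stmt11_cont_aux k hk_cont b hb ht

lemma stmt11_core (T B m lam : ℝ) (hB : 0 ≤ B) (hml : 0 < m + lam)
    (k : ℝ → ℝ → ℝ)
    (hk_cont : ContinuousOn (fun p : ℝ × ℝ => k p.1 p.2)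
      (Set.Icc 0 T ×ˢ Set.Icc 0 T))
    (hk_bd : ∀ a ∈ Set.Icc (0 : ℝ) T, ∀ t ∈ Set.Icc (0 : ℝ) T,
      |k a t| ≤ B * Real.exp (-m * a))
    (b : ℝ → ℝ) (hb : ContinuousOn b (Set.Icc 0 T)) {t : ℝ}
    (ht : t ∈ Set.Icc (0:ℝ) T) :
    |∫ s in (0:ℝ)..t, k (t - s) t * b s| ≤
      B / (m + lam) * (Real.exp (lam * t) *
        ⨆ u : Set.Icc (0:ℝ) T, Real.exp (-lam * u) * |b u|) := by
  obtain ⟨ht0, htT⟩ := ht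
  set M := ⨆ u : Set.Icc (0:ℝ) T, Real.exp (-lam * u) * |b u| with hMdef
  have hgc : ContinuousOn (fun u : ℝ => Real.exp (-lam * u) * |b u|) (Set.Icc 0 T) :=
    ((Real.continuous_exp.comp (continuous_const.mul continuous_id)).continuousOn).mul hb.abs
  have hbdd : BddAbove (Set.range fun u : Set.Icc (0:ℝ) T =>
      Real.exp (-lam * (u:ℝ)) * |b u|) := by
    have h := isCompact_Icc.bddAbove_image hgc
    rwa [Set.image_eq_range] at h
  have hle : ∀ s ∈ Set.Icc (0:ℝ) T, Real.exp (-lam * s) * |b s| ≤ M :=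
    fun s hs => le_ciSup hbdd (⟨s, hs⟩ : Set.Icc (0:ℝ) T)
  have hM0 : 0 ≤ M := le_trans (by positivity) (hle 0 ⟨le_rfl, ht0.trans htT⟩)
  have hbM : ∀ s ∈ Set.Icc (0:ℝ) t, |b s| ≤ Real.exp (lam * s) * M := by
    intro s hs
    have h := hle s ⟨hs.1, hs.2.trans htT⟩
    have e1 : Real.exp (lam * s) * Real.exp (-lam * s) = 1 := by
      rw [← Real.exp_add]; ring_nf; exact Real.exp_zero
    nlinarith [Real.exp_pos (lam * s), Real.exp_pos (-lam * s), abs_nonneg (b s)]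
  have hfc := stmt11_cont_aux k hk_cont b hb ⟨ht0, htT⟩
  have hint1 := stmt11_int_aux k hk_cont b hb ⟨ht0, htT⟩
  have hint2 : IntervalIntegrable (fun s => |k (t - s) t * b s|) volume 0 t := by
    apply ContinuousOn.intervalIntegrable
    rw [Set.uIcc_of_le ht0]
    exact hfc.abs
  have hint3 : IntervalIntegrable
      (fun s => B * Real.exp (-m * (t - s)) * (Real.exp (lam * s) * M)) volume 0 t :=
    (Continuous.intervalIntegrable (by fun_prop) 0 t)
  have habs : |∫ s in (0:ℝ)..t, k (t - s) t * b s| ≤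
      ∫ s in (0:ℝ)..t, |k (t - s) t * b s| :=
    intervalIntegral.abs_integral_le_integral_abs ht0
  have hmono : (∫ s in (0:ℝ)..t, |k (t - s) t * b s|) ≤
      ∫ s in (0:ℝ)..t, B * Real.exp (-m * (t - s)) * (Real.exp (lam * s) * M) := by
    apply intervalIntegral.integral_mono_on ht0 hint2 hint3
    intro s hs
    rw [abs_mul]
    have h1 : |k (t - s) t| ≤ B * Real.exp (-m * (t - s)) :=
      hk_bd (t - s) ⟨by linarith [hs.2], by linarith [hs.1]⟩ t ⟨ht0, htT⟩
    exact mul_le_mul h1 (hbM s hs) (abs_nonneg _) (by positivity)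
  have hcalc : (∫ s in (0:ℝ)..t, B * Real.exp (-m * (t - s)) * (Real.exp (lam * s) * M))
      = B * M * Real.exp (-(m * t)) * ((Real.exp ((m + lam) * t) - 1) / (m + lam)) := by
    have h1 : ∀ s : ℝ, B * Real.exp (-m * (t - s)) * (Real.exp (lam * s) * M)
        = B * M * Real.exp (-(m * t)) * Real.exp ((m + lam) * s) := by
      intro s
      have e : Real.exp (-m * (t - s)) * Real.exp (lam * s)
          = Real.exp (-(m * t)) * Real.exp ((m + lam) * s) := by
        rw [← Real.exp_add, ← Real.exp_add]; ring_nf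
      calc B * Real.exp (-m * (t - s)) * (Real.exp (lam * s) * M)
          = B * M * (Real.exp (-m * (t - s)) * Real.exp (lam * s)) := by ring
        _ = B * M * (Real.exp (-(m * t)) * Real.exp ((m + lam) * s)) := by rw [e]
        _ = B * M * Real.exp (-(m * t)) * Real.exp ((m + lam) * s) := by ring
    simp_rw [h1]
    rw [intervalIntegral.integral_const_mul]
    congr 1
    have h2 := intervalIntegral.integral_comp_mul_left (a := (0:ℝ)) (b := t)
      (fun x => Real.exp x) (ne_of_gt hml)
    rw [h2]
    simp only [smul_eq_mul, integral_exp, mul_zero, Real.exp_zero]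
    ring
  have hfin : B * M * Real.exp (-(m * t)) * ((Real.exp ((m + lam) * t) - 1) / (m + lam))
      ≤ B / (m + lam) * (Real.exp (lam * t) * M) := by
    have e : Real.exp (-(m * t)) * Real.exp ((m + lam) * t) = Real.exp (lam * t) := by
      rw [← Real.exp_add]; ring_nf
    calc B * M * Real.exp (-(m * t)) * ((Real.exp ((m + lam) * t) - 1) / (m + lam))
        ≤ B * M * Real.exp (-(m * t)) * (Real.exp ((m + lam) * t) / (m + lam)) := by
          refine mul_le_mul_of_nonneg_left ?_ (by positivity)
          exact (div_le_div_iff_of_pos_right hml).mpr (by linarith)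
      _ = B / (m + lam) * (Real.exp (lam * t) * M) := by rw [← e]; ring
  linarith [habs.trans (hmono.trans (le_of_eq hcalc))]

lemma stmt11_est (T B m lam : ℝ) (hT : 0 < T) (hB : 0 ≤ B) (hml : 0 < m + lam)
    (k : ℝ → ℝ → ℝ)
    (hk_cont : ContinuousOn (fun p : ℝ × ℝ => k p.1 p.2)
      (Set.Icc 0 T ×ˢ Set.Icc 0 T))
    (hk_bd : ∀ a ∈ Set.Icc (0 : ℝ) T, ∀ t ∈ Set.Icc (0 : ℝ) T,
      |k a t| ≤ B * Real.exp (-m * a))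
    (b1 b2 : ℝ → ℝ) (hb1 : ContinuousOn b1 (Set.Icc 0 T))
    (hb2 : ContinuousOn b2 (Set.Icc 0 T)) :
    (⨆ t : Set.Icc (0:ℝ) T, Real.exp (-lam * t) *
        |(∫ s in (0:ℝ)..(t:ℝ), k ((t:ℝ) - s) (t:ℝ) * b1 s) -
          ∫ s in (0:ℝ)..(t:ℝ), k ((t:ℝ) - s) (t:ℝ) * b2 s|)
      ≤ (B / (m + lam)) *
        ⨆ t : Set.Icc (0:ℝ) T, Real.exp (-lam * t) * |b1 t - b2 t| := by
  haveI : Nonempty (Set.Icc (0:ℝ) T) := (Set.nonempty_Icc.2 hT.le).to_subtype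
  apply ciSup_le
  rintro ⟨t, ht⟩
  show Real.exp (-lam * t) *
      |(∫ s in (0:ℝ)..t, k (t - s) t * b1 s) - ∫ s in (0:ℝ)..t, k (t - s) t * b2 s| ≤ _
  have hI1 := stmt11_int_aux k hk_cont b1 hb1 ht
  have hI2 := stmt11_int_aux k hk_cont b2 hb2 ht
  rw [← intervalIntegral.integral_sub hI1 hI2]
  simp_rw [← mul_sub]
  have hc := stmt11_core T B m lam hB hml k hk_cont hk_bd
    (fun s => b1 s - b2 s) (hb1.sub hb2) ht
  have e1 : Real.exp (-lam * t) * Real.exp (lam * t) = 1 := by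
    rw [← Real.exp_add]; ring_nf; exact Real.exp_zero
  calc Real.exp (-lam * t) * |∫ s in (0:ℝ)..t, k (t - s) t * (b1 s - b2 s)|
      ≤ Real.exp (-lam * t) * (B / (m + lam) * (Real.exp (lam * t) *
          ⨆ u : Set.Icc (0:ℝ) T, Real.exp (-lam * u) * |b1 u - b2 u|)) :=
        mul_le_mul_of_nonneg_left hc (Real.exp_pos _).le
    _ = (B / (m + lam)) *
          ⨆ u : Set.Icc (0:ℝ) T, Real.exp (-lam * u) * |b1 u - b2 u| := by
        set M := ⨆ u : Set.Icc (0:ℝ) T, Real.exp (-lam * u) * |b1 u - b2 u|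
        linear_combination (B / (m + lam)) * M * e1

end Stmt11Aux


/-- Contraction estimate at the core of Theorem 2.7: the Volterra map
`(𝓕b)(t) = F(t) + ∫₀^t k(t−s,t) b(s) ds`, with `|k(a,t)| ≤ B e^{−ma}`, satisfies
`‖𝓕b₁ − 𝓕b₂‖_λ ≤ (B/(m+λ))‖b₁ − b₂‖_λ` in the weighted norm
`‖b‖_λ = sup_{t∈[0,T]} e^{−λt}|b(t)|`, provided `m + λ > 0`; in particular, if
`B < m + λ` then `𝓕` has a unique fixed point in `C([0,T],ℝ)`. -/
theorem stmt11 (T B m lam : ℝ) (hT : 0 < T) (hB : 0 ≤ B) (hml : 0 < m + lam)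
    (k : ℝ → ℝ → ℝ)
    (hk_cont : ContinuousOn (fun p : ℝ × ℝ => k p.1 p.2)
      (Set.Icc 0 T ×ˢ Set.Icc 0 T))
    (hk_bd : ∀ a ∈ Set.Icc (0 : ℝ) T, ∀ t ∈ Set.Icc (0 : ℝ) T,
      |k a t| ≤ B * Real.exp (-m * a))
    (F : ℝ → ℝ) (hF : ContinuousOn F (Set.Icc 0 T))
    (𝓕 : (ℝ → ℝ) → (ℝ → ℝ))
    (h𝓕 : ∀ (b : ℝ → ℝ) (t : ℝ),
      𝓕 b t = F t + ∫ s in (0 : ℝ)..t, k (t - s) t * b s) :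
    (∀ b1 b2 : ℝ → ℝ, ContinuousOn b1 (Set.Icc 0 T) →
      ContinuousOn b2 (Set.Icc 0 T) →
      (⨆ t : Set.Icc (0 : ℝ) T, Real.exp (-lam * t) * |𝓕 b1 t - 𝓕 b2 t|)
        ≤ (B / (m + lam)) *
          ⨆ t : Set.Icc (0 : ℝ) T, Real.exp (-lam * t) * |b1 t - b2 t|) ∧
    (B < m + lam → ∃ b : ℝ → ℝ, ContinuousOn b (Set.Icc 0 T) ∧
      (∀ t ∈ Set.Icc (0 : ℝ) T, 𝓕 b t = b t) ∧
      ∀ b' : ℝ → ℝ, ContinuousOn b' (Set.Icc 0 T) →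
        (∀ t ∈ Set.Icc (0 : ℝ) T, 𝓕 b' t = b' t) →
        ∀ t ∈ Set.Icc (0 : ℝ) T, b' t = b t) := by
  haveI : Nonempty (Set.Icc (0:ℝ) T) := (Set.nonempty_Icc.2 hT.le).to_subtype
  haveI : CompactSpace (Set.Icc (0:ℝ) T) := isCompact_iff_compactSpace.mp isCompact_Icc
  have part1 : ∀ b1 b2 : ℝ → ℝ, ContinuousOn b1 (Set.Icc 0 T) →
      ContinuousOn b2 (Set.Icc 0 T) →
      (⨆ t : Set.Icc (0 : ℝ) T, Real.exp (-lam * t) * |𝓕 b1 t - 𝓕 b2 t|)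
        ≤ (B / (m + lam)) *
          ⨆ t : Set.Icc (0 : ℝ) T, Real.exp (-lam * t) * |b1 t - b2 t| := by
    intro b1 b2 hb1 hb2
    have h := stmt11_est T B m lam hT hB hml k hk_cont hk_bd b1 b2 hb1 hb2
    simpa only [h𝓕, add_sub_add_left_eq_sub] using h
  refine ⟨part1, fun hBlt => ?_⟩
  set q := B / (m + lam) with hq
  have hq0 : 0 ≤ q := div_nonneg hB hml.le
  have hq1 : q < 1 := (div_lt_one hml).mpr hBlt
  set P : ℝ → Set.Icc (0:ℝ) T := Set.projIcc 0 T hT.le with hP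
  have hPc : Continuous P := continuous_projIcc
  have hPid : ∀ {x : ℝ}, x ∈ Set.Icc (0:ℝ) T → (P x : ℝ) = x := by
    intro x hx
    rw [hP, Set.projIcc_of_mem hT.le hx]
  have hPt : ∀ t : Set.Icc (0:ℝ) T, P (t:ℝ) = t := fun t => Subtype.ext (hPid t.2)
  set K2 : ℝ × ℝ → ℝ := fun p => k (P p.1) (P p.2) with hK2def
  have hK2 : Continuous K2 := by
    have hg2 : Continuous (fun p : ℝ × ℝ => (((P p.1 : ℝ), (P p.2 : ℝ)) : ℝ × ℝ)) :=
      (continuous_subtype_val.comp (hPc.comp continuous_fst)).prodMk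
        (continuous_subtype_val.comp (hPc.comp continuous_snd))
    exact hk_cont.comp_continuous hg2
      (fun p : ℝ × ℝ => Set.mk_mem_prod (P p.1).2 (P p.2).2)
  have hFc : Continuous fun t : ℝ => F (P t) :=
    hF.comp_continuous (continuous_subtype_val.comp hPc) (fun x => (P x).2)
  -- the Volterra operator on C([0,T])
  have key : ∀ g : C(Set.Icc (0:ℝ) T, ℝ),
      Continuous (fun t : ℝ => F (P t) + ∫ s in (0:ℝ)..t, K2 (t - s, t) * g (P s)) := by
    intro g
    refine hFc.add ?_
    exact intervalIntegral.continuous_parametric_intervalIntegral_of_continuous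
      (μ := volume) (f := fun t s => K2 (t - s, t) * g (P s))
      (((hK2.comp ((continuous_fst.sub continuous_snd).prodMk continuous_fst)).mul
        ((g.continuous.comp hPc).comp continuous_snd))) continuous_id
  set Φ : C(Set.Icc (0:ℝ) T, ℝ) → C(Set.Icc (0:ℝ) T, ℝ) := fun g =>
    ⟨fun u => F (P (u:ℝ)) + ∫ s in (0:ℝ)..(u:ℝ), K2 ((u:ℝ) - s, (u:ℝ)) * g (P s),
      (key g).comp continuous_subtype_val⟩ with hΦ
  -- replace extended kernel by k inside the integral
  have hKk : ∀ (g : ℝ → ℝ) (t : ℝ), t ∈ Set.Icc (0:ℝ) T →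
      (∫ s in (0:ℝ)..t, K2 (t - s, t) * g s) = ∫ s in (0:ℝ)..t, k (t - s) t * g s := by
    intro g t ht
    apply intervalIntegral.integral_congr
    intro s hs
    rw [Set.uIcc_of_le ht.1] at hs
    have h1 : t - s ∈ Set.Icc (0:ℝ) T := ⟨by linarith [hs.2], by linarith [hs.1, ht.2]⟩
    simp only [hK2def]
    rw [hPid h1, hPid ht]
  -- weighted distance
  set D : C(Set.Icc (0:ℝ) T, ℝ) → C(Set.Icc (0:ℝ) T, ℝ) → ℝ := fun g1 g2 =>
    ⨆ t : Set.Icc (0:ℝ) T, Real.exp (-lam * t) * |g1 t - g2 t| with hD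
  have hDbdd : ∀ g1 g2 : C(Set.Icc (0:ℝ) T, ℝ),
      BddAbove (Set.range fun t : Set.Icc (0:ℝ) T =>
        Real.exp (-lam * (t:ℝ)) * |g1 t - g2 t|) := by
    intro g1 g2
    have hc : Continuous fun t : Set.Icc (0:ℝ) T =>
        Real.exp (-lam * (t:ℝ)) * |g1 t - g2 t| :=
      (Real.continuous_exp.comp (continuous_const.mul continuous_subtype_val)).mul
        (g1.continuous.sub g2.continuous).abs
    have h := isCompact_univ.bddAbove_image hc.continuousOn
    rwa [Set.image_univ] at h
  have hDle : ∀ (g1 g2 : C(Set.Icc (0:ℝ) T, ℝ)) (t : Set.Icc (0:ℝ) T),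
      Real.exp (-lam * (t:ℝ)) * |g1 t - g2 t| ≤ D g1 g2 :=
    fun g1 g2 t => le_ciSup (hDbdd g1 g2) t
  have hD0 : ∀ g1 g2 : C(Set.Icc (0:ℝ) T, ℝ), 0 ≤ D g1 g2 := fun g1 g2 =>
    le_trans (by positivity) (hDle g1 g2 ⟨0, le_rfl, hT.le⟩)
  -- contraction in D
  have hcontr : ∀ g1 g2 : C(Set.Icc (0:ℝ) T, ℝ), D (Φ g1) (Φ g2) ≤ q * D g1 g2 := by
    intro g1 g2
    have h := stmt11_est T B m lam hT hB hml k hk_cont hk_bd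
      (fun s => g1 (P s)) (fun s => g2 (P s))
      (g1.continuous.comp hPc).continuousOn (g2.continuous.comp hPc).continuousOn
    have e1 : (fun t : Set.Icc (0:ℝ) T => Real.exp (-lam * (t:ℝ)) * |Φ g1 t - Φ g2 t|)
        = fun t : Set.Icc (0:ℝ) T => Real.exp (-lam * (t:ℝ)) *
          |(∫ s in (0:ℝ)..(t:ℝ), k ((t:ℝ) - s) (t:ℝ) * g1 (P s)) -
            ∫ s in (0:ℝ)..(t:ℝ), k ((t:ℝ) - s) (t:ℝ) * g2 (P s)| := by
      funext t
      have ha : Φ g1 t - Φ g2 t =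
          (∫ s in (0:ℝ)..(t:ℝ), k ((t:ℝ) - s) (t:ℝ) * g1 (P s)) -
            ∫ s in (0:ℝ)..(t:ℝ), k ((t:ℝ) - s) (t:ℝ) * g2 (P s) := by
        show (F (P (t:ℝ)) + ∫ s in (0:ℝ)..(t:ℝ), K2 ((t:ℝ) - s, (t:ℝ)) * g1 (P s)) -
          (F (P (t:ℝ)) + ∫ s in (0:ℝ)..(t:ℝ), K2 ((t:ℝ) - s, (t:ℝ)) * g2 (P s)) = _
        rw [hKk (fun s => g1 (P s)) (t:ℝ) t.2, hKk (fun s => g2 (P s)) (t:ℝ) t.2]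
        ring
      rw [ha]
    have e2 : (fun t : Set.Icc (0:ℝ) T =>
          Real.exp (-lam * (t:ℝ)) * |g1 (P (t:ℝ)) - g2 (P (t:ℝ))|)
        = fun t : Set.Icc (0:ℝ) T => Real.exp (-lam * (t:ℝ)) * |g1 t - g2 t| := by
      funext t; rw [hPt t]
    calc D (Φ g1) (Φ g2)
        = ⨆ t : Set.Icc (0:ℝ) T, Real.exp (-lam * (t:ℝ)) *
            |(∫ s in (0:ℝ)..(t:ℝ), k ((t:ℝ) - s) (t:ℝ) * g1 (P s)) -
              ∫ s in (0:ℝ)..(t:ℝ), k ((t:ℝ) - s) (t:ℝ) * g2 (P s)| := by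
          rw [hD]; exact congrArg _ e1
      _ ≤ q * ⨆ t : Set.Icc (0:ℝ) T,
            Real.exp (-lam * (t:ℝ)) * |g1 (P (t:ℝ)) - g2 (P (t:ℝ))| := h
      _ = q * D g1 g2 := by rw [hD]; exact congrArg _ (congrArg _ e2)
  -- comparison with sup distance
  set c1 : ℝ := min 1 (Real.exp (-lam * T)) with hc1
  set c2 : ℝ := max 1 (Real.exp (-lam * T)) with hc2
  have hc1p : (0:ℝ) < c1 := lt_min one_pos (Real.exp_pos _)
  have hc2p : (0:ℝ) < c2 := lt_of_lt_of_le one_pos (le_max_left _ _)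
  have hexp_mem : ∀ t : Set.Icc (0:ℝ) T,
      c1 ≤ Real.exp (-lam * (t:ℝ)) ∧ Real.exp (-lam * (t:ℝ)) ≤ c2 := by
    intro t
    obtain ⟨h0t, htT⟩ := t.2
    constructor
    · rcases le_total 0 lam with h | h
      · exact le_trans (min_le_right _ _) (Real.exp_le_exp.mpr (by nlinarith))
      · exact le_trans (min_le_left _ _) (by
          rw [show (1:ℝ) = Real.exp 0 from Real.exp_zero.symm]
          exact Real.exp_le_exp.mpr (by nlinarith))
    · rcases le_total 0 lam with h | h
      · refine le_trans ?_ (le_max_left _ _)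
        rw [show (1:ℝ) = Real.exp 0 from Real.exp_zero.symm]
        exact Real.exp_le_exp.mpr (by nlinarith)
      · exact le_trans (Real.exp_le_exp.mpr (by nlinarith)) (le_max_right _ _)
  have hd_ub : ∀ g1 g2 : C(Set.Icc (0:ℝ) T, ℝ), D g1 g2 ≤ c2 * dist g1 g2 := by
    intro g1 g2
    apply ciSup_le
    intro t
    have h2 : |g1 t - g2 t| ≤ dist g1 g2 := by
      rw [← Real.dist_eq]; exact ContinuousMap.dist_apply_le_dist t
    have h3 := (hexp_mem t).2
    nlinarith [abs_nonneg (g1 t - g2 t), Real.exp_pos (-lam * (t:ℝ)),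
      (dist_nonneg : (0:ℝ) ≤ dist g1 g2)]
  have hd_lb : ∀ g1 g2 : C(Set.Icc (0:ℝ) T, ℝ), dist g1 g2 ≤ c1⁻¹ * D g1 g2 := by
    intro g1 g2
    rw [ContinuousMap.dist_le (mul_nonneg (inv_nonneg.mpr hc1p.le) (hD0 g1 g2))]
    intro t
    have h := hDle g1 g2 t
    have h3 := (hexp_mem t).1
    rw [Real.dist_eq, show c1⁻¹ * D g1 g2 = D g1 g2 / c1 by ring, le_div_iff₀ hc1p]
    nlinarith [abs_nonneg (g1 t - g2 t)]
  -- iterates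
  have hiter : ∀ (n : ℕ) (g1 g2 : C(Set.Icc (0:ℝ) T, ℝ)),
      D (Φ^[n] g1) (Φ^[n] g2) ≤ q ^ n * D g1 g2 := by
    intro n
    induction n with
    | zero => intro g1 g2; simp
    | succ n ih =>
      intro g1 g2
      rw [Function.iterate_succ_apply', Function.iterate_succ_apply']
      calc D (Φ (Φ^[n] g1)) (Φ (Φ^[n] g2)) ≤ q * D (Φ^[n] g1) (Φ^[n] g2) := hcontr _ _
        _ ≤ q * (q ^ n * D g1 g2) := mul_le_mul_of_nonneg_left (ih g1 g2) hq0
        _ = q ^ (n + 1) * D g1 g2 := by ring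
  obtain ⟨n, hn⟩ : ∃ n : ℕ, c1⁻¹ * c2 * q ^ n < 1 := by
    obtain ⟨n, hn⟩ := exists_pow_lt_of_lt_one (div_pos hc1p hc2p) hq1
    refine ⟨n, ?_⟩
    have : c1⁻¹ * c2 * q ^ n < c1⁻¹ * c2 * (c1 / c2) := by
      apply mul_lt_mul_of_pos_left hn (by positivity)
    calc c1⁻¹ * c2 * q ^ n < c1⁻¹ * c2 * (c1 / c2) := this
      _ = 1 := by field_simp
  have hlip : ∀ g1 g2 : C(Set.Icc (0:ℝ) T, ℝ),
      dist (Φ^[n] g1) (Φ^[n] g2) ≤ (c1⁻¹ * c2 * q ^ n) * dist g1 g2 := by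
    intro g1 g2
    calc dist (Φ^[n] g1) (Φ^[n] g2) ≤ c1⁻¹ * D (Φ^[n] g1) (Φ^[n] g2) := hd_lb _ _
      _ ≤ c1⁻¹ * (q ^ n * D g1 g2) :=
          mul_le_mul_of_nonneg_left (hiter n g1 g2) (by positivity)
      _ ≤ c1⁻¹ * (q ^ n * (c2 * dist g1 g2)) := by
          refine mul_le_mul_of_nonneg_left ?_ (by positivity)
          exact mul_le_mul_of_nonneg_left (hd_ub g1 g2) (by positivity)
      _ = (c1⁻¹ * c2 * q ^ n) * dist g1 g2 := by ring
  set r : NNReal := ⟨c1⁻¹ * c2 * q ^ n, by positivity⟩ with hr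
  have hC : ContractingWith r (Φ^[n]) := by
    constructor
    · rw [← NNReal.coe_lt_coe]; exact hn
    · exact LipschitzWith.of_dist_le_mul fun g1 g2 => hlip g1 g2
  haveI : Nonempty C(Set.Icc (0:ℝ) T, ℝ) := ⟨ContinuousMap.const _ 0⟩
  set x := hC.fixedPoint (Φ^[n]) with hx
  have hfix : Φ x = x := hC.isFixedPt_fixedPoint_iterate
  have hbc : ContinuousOn (fun t : ℝ => (x (P t) : ℝ)) (Set.Icc 0 T) :=
    (x.continuous.comp hPc).continuousOn
  have hbfix : ∀ t ∈ Set.Icc (0:ℝ) T, 𝓕 (fun s => x (P s)) t = x (P t) := by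
    intro t ht
    have h1 : (Φ x) ⟨t, ht⟩ = x ⟨t, ht⟩ := by rw [hfix]
    have h2 : F (P t) + ∫ s in (0:ℝ)..t, K2 (t - s, t) * x (P s) = x ⟨t, ht⟩ := h1
    rw [h𝓕, ← hKk (fun s => x (P s)) t ht]
    rw [hPid ht] at h2
    rw [h2]
    exact congrArg x (hPt ⟨t, ht⟩).symm
  refine ⟨fun s => x (P s), hbc, hbfix, ?_⟩
  intro b' hb' hfixb' t ht
  have hE := stmt11_est T B m lam hT hB hml k hk_cont hk_bd b' (fun s => x (P s)) hb' hbc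
  have e : (fun u : Set.Icc (0:ℝ) T => Real.exp (-lam * (u:ℝ)) *
      |(∫ s in (0:ℝ)..(u:ℝ), k ((u:ℝ) - s) (u:ℝ) * b' s) -
        ∫ s in (0:ℝ)..(u:ℝ), k ((u:ℝ) - s) (u:ℝ) * x (P s)|)
      = fun u : Set.Icc (0:ℝ) T =>
        Real.exp (-lam * (u:ℝ)) * |b' u - x (P (u:ℝ))| := by
    funext u
    have h1' : (∫ s in (0:ℝ)..(u:ℝ), k ((u:ℝ) - s) (u:ℝ) * b' s) = b' u - F u := by
      have h := hfixb' (u:ℝ) u.2; rw [h𝓕] at h; linarith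
    have h2' : (∫ s in (0:ℝ)..(u:ℝ), k ((u:ℝ) - s) (u:ℝ) * x (P s))
        = x (P (u:ℝ)) - F u := by
      have h := hbfix (u:ℝ) u.2; rw [h𝓕] at h; linarith
    rw [h1', h2']
    ring_nf
  rw [e] at hE
  set M := ⨆ u : Set.Icc (0:ℝ) T, Real.exp (-lam * (u:ℝ)) * |b' u - x (P (u:ℝ))| with hM
  have hMb : BddAbove (Set.range fun u : Set.Icc (0:ℝ) T =>
      Real.exp (-lam * (u:ℝ)) * |b' u - x (P (u:ℝ))|) := by
    have hc : ContinuousOn (fun u : ℝ => Real.exp (-lam * u) * |b' u - x (P u)|)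
        (Set.Icc 0 T) :=
      (Real.continuous_exp.comp (continuous_const.mul continuous_id)).continuousOn.mul
        (hb'.sub hbc).abs
    have h := isCompact_Icc.bddAbove_image hc
    rwa [Set.image_eq_range] at h
  have hterm : Real.exp (-lam * t) * |b' t - x (P t)| ≤ M :=
    le_ciSup hMb (⟨t, ht⟩ : Set.Icc (0:ℝ) T)
  have hM0' : 0 ≤ M := le_trans (by positivity) hterm
  have hMle : M ≤ 0 := by nlinarith
  have h0 : Real.exp (-lam * t) * |b' t - x (P t)| ≤ 0 := hterm.trans hMle
  have hz : |b' t - x (P t)| = 0 := by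
    nlinarith [Real.exp_pos (-lam * t), abs_nonneg (b' t - x (P t))]
  have := abs_eq_zero.mp hz
  linarith
end

section
/- Let k > 0, δ > 0, and let c : [0,∞) → ℝ be continuous with c(t) ≥ δ for all t ≥ 0. Let η : [0,∞) → ℝ be differentiable and satisfy η′(t) = −c(t)·k·(e^{η(t)} − 1) for all t ≥ 0. Then the function t ↦ k·(e^{η(t)} − η(t) − 1) is nonincreasing on [0,∞), and η(t) → 0 as t → ∞. In particular, the zero equilibrium is globally asymptotically stable. -/
/-! The Lyapunov function `V(η) = k(e^η − η − 1)` has derivative `−c k² (e^η − 1)² ≤ 0` along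
solutions. For convergence, the substitution `y = 1 − e^{−η}` linearizes the equation to
`y′ = −c k y`; since `c k ≥ δ k > 0`, the quantity `y² e^{2δkt}` is nonincreasing, so `y` decays
exponentially and `η = −log (1 − y) → 0`. -/

open Filter Set Topology Real

theorem antitoneOn_Ici_of_hasDerivWithinAt_nonpos {f f' : ℝ → ℝ} {a : ℝ}
    (hf : ∀ t ∈ Ici a, HasDerivWithinAt f (f' t) (Ici a) t) (hf' : ∀ t ∈ Ioi a, f' t ≤ 0) :
    AntitoneOn f (Ici a) := by
  refine antitoneOn_of_hasDerivWithinAt_nonpos (f' := f') (convex_Ici a)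
    (fun t ht => (hf t ht).continuousWithinAt) ?_ ?_ <;> rw [interior_Ici]
  · exact fun t ht => (hf t (mem_Ici_of_Ioi ht)).mono Ioi_subset_Ici_self
  · exact hf'

section LinearDecay

variable {y a : ℝ → ℝ} {r : ℝ}

theorem abs_le_mul_exp_of_hasDerivWithinAt_neg_mul
    (hy : ∀ t ∈ Ici 0, HasDerivWithinAt y (-a t * y t) (Ici 0) t) (ha : ∀ t ∈ Ioi 0, r ≤ a t)
    {t : ℝ} (ht : 0 ≤ t) : |y t| ≤ |y 0| * exp (-(r * t)) := by
  have hanti : AntitoneOn (fun s => y s ^ 2 * exp (2 * r * s)) (Ici 0) := by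
    refine antitoneOn_Ici_of_hasDerivWithinAt_nonpos
      (f' := fun s => 2 * y s ^ 2 * exp (2 * r * s) * (r - a s)) (fun s hs => ?_) (fun s hs => ?_)
    · refine (((hy s hs).pow 2).mul (((hasDerivWithinAt_id s _).const_mul (2 * r)).exp)).congr_deriv ?_
      simp only [id, Pi.pow_apply]
      ring
    · exact mul_nonpos_of_nonneg_of_nonpos (by positivity) (sub_nonpos.2 (ha s hs))
  have hsq : y t ^ 2 * exp (2 * r * t) ≤ y 0 ^ 2 := by
    simpa using hanti self_mem_Ici ht ht
  refine abs_le_of_sq_le_sq ?_ (by positivity)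
  have hexp : exp (2 * r * t) * exp (-(r * t)) ^ 2 = 1 := by
    rw [← exp_nat_mul, ← exp_add, ← exp_zero]; push_cast; ring_nf
  calc y t ^ 2 = y t ^ 2 * exp (2 * r * t) * exp (-(r * t)) ^ 2 := by rw [mul_assoc, hexp, mul_one]
    _ ≤ y 0 ^ 2 * exp (-(r * t)) ^ 2 := by gcongr
    _ = (|y 0| * exp (-(r * t))) ^ 2 := by rw [mul_pow, sq_abs]

theorem tendsto_zero_of_hasDerivWithinAt_neg_mul (hr : 0 < r)
    (hy : ∀ t ∈ Ici 0, HasDerivWithinAt y (-a t * y t) (Ici 0) t) (ha : ∀ t ∈ Ioi 0, r ≤ a t) :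
    Tendsto y atTop (𝓝 0) := by
  have hbound : Tendsto (fun t => |y 0| * exp (-(r * t))) atTop (𝓝 0) := by
    simpa using (tendsto_exp_neg_atTop_nhds_zero.comp (tendsto_id.const_mul_atTop hr)).const_mul |y 0|
  exact squeeze_zero_norm' ((eventually_ge_atTop 0).mono fun t ht =>
    abs_le_mul_exp_of_hasDerivWithinAt_neg_mul hy ha ht) hbound

end LinearDecay

section Aquatic

variable {η c : ℝ → ℝ} {k : ℝ}

theorem antitoneOn_lyapunov
    (hη : ∀ t ∈ Ici 0, HasDerivWithinAt η (-c t * k * (exp (η t) - 1)) (Ici 0) t)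
    (hc : ∀ t ∈ Ioi 0, 0 ≤ c t) :
    AntitoneOn (fun t => k * (exp (η t) - η t - 1)) (Ici 0) := by
  refine antitoneOn_Ici_of_hasDerivWithinAt_nonpos
    (f' := fun t => -(c t * (k * (exp (η t) - 1)) ^ 2)) (fun t ht => ?_) (fun t ht => ?_)
  · exact ((((hη t ht).exp.sub (hη t ht)).sub_const 1).const_mul k).congr_deriv (by ring)
  · exact neg_nonpos.2 (mul_nonneg (hc t ht) (sq_nonneg _))

theorem hasDerivWithinAt_one_sub_exp_neg
    (hη : ∀ t ∈ Ici 0, HasDerivWithinAt η (-c t * k * (exp (η t) - 1)) (Ici 0) t)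
    {t : ℝ} (ht : t ∈ Ici 0) :
    HasDerivWithinAt (fun s => 1 - exp (-η s)) (-(c t * k) * (1 - exp (-η t))) (Ici 0) t := by
  refine ((hη t ht).neg.exp.const_sub 1).congr_deriv ?_
  simp only [Pi.neg_apply, exp_neg]
  field_simp

theorem tendsto_zero_of_hasDerivWithinAt_exp_sub_one {δ : ℝ} (hk : 0 < k) (hδ : 0 < δ)
    (hη : ∀ t ∈ Ici 0, HasDerivWithinAt η (-c t * k * (exp (η t) - 1)) (Ici 0) t)
    (hc : ∀ t ∈ Ioi 0, δ ≤ c t) :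
    Tendsto η atTop (𝓝 0) := by
  have hy : Tendsto (fun t => 1 - exp (-η t)) atTop (𝓝 0) :=
    tendsto_zero_of_hasDerivWithinAt_neg_mul (mul_pos hδ hk)
      (fun t ht => hasDerivWithinAt_one_sub_exp_neg hη ht)
      (fun t ht => mul_le_mul_of_nonneg_right (hc t ht) hk.le)
  have hexp : Tendsto (fun t => exp (-η t)) atTop (𝓝 1) := by
    simpa using (tendsto_const_nhds (x := (1 : ℝ))).sub hy
  simpa using ((continuousAt_log one_ne_zero).tendsto.comp hexp).neg

end Aquatic

theorem stmt14_general (k δ : ℝ) (hk : 0 < k) (hδ : 0 < δ)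
    (c : ℝ → ℝ)
    (hc : ∀ t, 0 ≤ t → δ ≤ c t)
    (η : ℝ → ℝ)
    (hη : ∀ t, 0 ≤ t →
      HasDerivWithinAt η (-(c t) * k * (Real.exp (η t) - 1)) (Set.Ici 0) t) :
    AntitoneOn (fun t => k * (Real.exp (η t) - η t - 1)) (Set.Ici 0) ∧
    Tendsto η atTop (nhds 0) :=
  ⟨antitoneOn_lyapunov hη fun t ht => hδ.le.trans (hc t (le_of_lt ht)),
    tendsto_zero_of_hasDerivWithinAt_exp_sub_one hk hδ hη fun t ht => hc t (le_of_lt ht)⟩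

/-- Reduced scalar dynamics underlying Theorem 3.6 (mosquito model under the
aquatic-stage feedback control): if `η′(t) = −c(t)·k·(e^{η(t)} − 1)` with `c`
continuous and `c(t) ≥ δ > 0`, then the Lyapunov function
`t ↦ k(e^{η(t)} − η(t) − 1)` is nonincreasing on `[0,∞)` and `η(t) → 0` as
`t → ∞` (global asymptotic stability of the zero equilibrium). -/
theorem stmt14 (k δ : ℝ) (hk : 0 < k) (hδ : 0 < δ)
    (c : ℝ → ℝ) (hc_cont : ContinuousOn c (Set.Ici 0))
    (hc : ∀ t, 0 ≤ t → δ ≤ c t)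
    (η : ℝ → ℝ)
    (hη : ∀ t, 0 ≤ t →
      HasDerivWithinAt η (-(c t) * k * (Real.exp (η t) - 1)) (Set.Ici 0) t) :
    AntitoneOn (fun t => k * (Real.exp (η t) - η t - 1)) (Set.Ici 0) ∧
    Tendsto η atTop (nhds 0) :=
  stmt14_general k δ hk hδ c hc η hη
end
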